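/- arXiv:1406.7535 — 7 statements merged into one kernel-verified Lean document; each statement's English description precedes it below -/
import Mathlib

section
/- Let n ≥ 1 and δ ≥ 0 be integers, and let A be a finite set of pairs (e, e') of distinct exponent vectors in {0,1,...,δ}^n. Define W(e) = ∑_{i=1}^n e_i·(δ+1)^{i-1}. Let N = n·|A|·⌈log₂(δ+1)⌉ + 1. Then there exists a prime p, not exceeding the N-th prime number, such that for every pair (e, e') ∈ A one has W(e) ≢ W(e') (mod p). -/
/-- The Kronecker weight function `W(e) = ∑_{i=1}^n e_i·(δ+1)^{i-1}` (here 0-indexed). -/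
def kroneckerWeight (n δ : ℕ) (e : Fin n → ℕ) : ℕ :=
  ∑ i : Fin n, e i * (δ + 1) ^ (i : ℕ)

lemma kroneckerWeight_eq_equiv (n δ : ℕ) (e : Fin n → ℕ) (he : ∀ i, e i ≤ δ) :
    kroneckerWeight n δ e =
      (finFunctionFinEquiv (fun i => (⟨e i, Nat.lt_succ_of_le (he i)⟩ : Fin (δ + 1))) : ℕ) := by
  rw [finFunctionFinEquiv_apply]
  rfl

lemma kroneckerWeight_lt (n δ : ℕ) (e : Fin n → ℕ) (he : ∀ i, e i ≤ δ) :
    kroneckerWeight n δ e < (δ + 1) ^ n := by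
  rw [kroneckerWeight_eq_equiv n δ e he]
  exact (finFunctionFinEquiv _).isLt

lemma kroneckerWeight_inj (n δ : ℕ) (e e' : Fin n → ℕ) (he : ∀ i, e i ≤ δ)
    (he' : ∀ i, e' i ≤ δ) (h : kroneckerWeight n δ e = kroneckerWeight n δ e') : e = e' := by
  rw [kroneckerWeight_eq_equiv n δ e he, kroneckerWeight_eq_equiv n δ e' he'] at h
  have := finFunctionFinEquiv.injective (Fin.val_injective h)
  funext i
  exact congrArg Fin.val (congrFun this i)

/-- For a finite set `A` of pairs of distinct exponent vectors in `{0,…,δ}^n`, there is a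
prime `p` not exceeding the `N`-th prime, with `N = n·|A|·⌈log₂(δ+1)⌉ + 1`, such that the
Kronecker weights of each pair in `A` are incongruent modulo `p`. -/
theorem kronecker_prime_separation (n δ N : ℕ) (hn : 1 ≤ n)
    (A : Finset ((Fin n → ℕ) × (Fin n → ℕ)))
    (hA : ∀ q ∈ A, (∀ i, q.1 i ≤ δ) ∧ (∀ i, q.2 i ≤ δ) ∧ q.1 ≠ q.2)
    (hN : N = n * A.card * Nat.clog 2 (δ + 1) + 1) :
    ∃ p : ℕ, p.Prime ∧ p ≤ Nat.nth Nat.Prime (N - 1) ∧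
      ∀ q ∈ A, ¬ (kroneckerWeight n δ q.1 ≡ kroneckerWeight n δ q.2 [MOD p]) := by
  by_contra hcon
  push_neg at hcon
  -- the product of all weight differences
  set D : ℕ := ∏ q ∈ A, ((kroneckerWeight n δ q.1 : ℤ) - kroneckerWeight n δ q.2).natAbs with hD
  have hDpos : 0 < D := by
    apply Finset.prod_pos
    intro q hq
    obtain ⟨h1, h2, hne⟩ := hA q hq
    have : kroneckerWeight n δ q.1 ≠ kroneckerWeight n δ q.2 := fun h =>
      hne (kroneckerWeight_inj n δ _ _ h1 h2 h)
    rw [Int.natAbs_pos]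
    intro h
    exact this (by exact_mod_cast sub_eq_zero.mp h)
  -- bound on D
  have hDle : D ≤ 2 ^ (N - 1) := by
    have h1 : D ≤ ((δ + 1) ^ n) ^ A.card := by
      rw [hD, ← Finset.prod_const]
      apply Finset.prod_le_prod
      · intro q _; exact Nat.zero_le _
      · intro q hq
        obtain ⟨h1, h2, _⟩ := hA q hq
        have b1 := kroneckerWeight_lt n δ q.1 h1
        have b2 := kroneckerWeight_lt n δ q.2 h2
        have : ((kroneckerWeight n δ q.1 : ℤ) - kroneckerWeight n δ q.2).natAbs < (δ+1)^n := by
          omega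
        omega
    have h2 : (δ + 1) ≤ 2 ^ Nat.clog 2 (δ + 1) := Nat.le_pow_clog one_lt_two _
    calc D ≤ ((δ + 1) ^ n) ^ A.card := h1
      _ ≤ ((2 ^ Nat.clog 2 (δ + 1)) ^ n) ^ A.card := by
          apply Nat.pow_le_pow_left; exact Nat.pow_le_pow_left h2 n
      _ = 2 ^ (n * A.card * Nat.clog 2 (δ + 1)) := by ring
      _ = 2 ^ (N - 1) := by rw [hN]; simp
  -- the first N primes all divide D
  set s : Finset ℕ := (Finset.range N).image (Nat.nth Nat.Prime) with hs
  have hprime : ∀ p ∈ s, Nat.Prime p := by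
    intro p hp
    simp only [hs, Finset.mem_image, Finset.mem_range] at hp
    obtain ⟨i, _, rfl⟩ := hp
    exact Nat.prime_nth_prime i
  have hdvd : ∀ p ∈ s, p ∣ D := by
    intro p hp
    simp only [hs, Finset.mem_image, Finset.mem_range] at hp
    obtain ⟨i, hi, rfl⟩ := hp
    have hle : Nat.nth Nat.Prime i ≤ Nat.nth Nat.Prime (N - 1) :=
      Nat.nth_monotone Nat.infinite_setOf_prime (by omega)
    obtain ⟨q, hq, hmod⟩ := hcon _ (Nat.prime_nth_prime i) hle
    have : (Nat.nth Nat.Prime i : ℤ) ∣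
        ((kroneckerWeight n δ q.1 : ℤ) - kroneckerWeight n δ q.2) := by
      have h := Nat.modEq_iff_dvd.mp hmod
      have := dvd_neg.mpr h
      rwa [neg_sub] at this
    have hp' : Nat.nth Nat.Prime i ∣
        ((kroneckerWeight n δ q.1 : ℤ) - kroneckerWeight n δ q.2).natAbs := by
      exact_mod_cast Int.dvd_natAbs.mpr this
    exact hp'.trans (Finset.dvd_prod_of_mem _ hq)
  have hprod_dvd : ∏ p ∈ s, p ∣ D :=
    Finset.prod_primes_dvd D (fun p hp => (hprime p hp).prime) hdvd
  have hcard : s.card = N :=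
    (Finset.card_image_of_injective _ (Nat.nth_injective Nat.infinite_setOf_prime)).trans
      (Finset.card_range N)
  have hprodge : 2 ^ N ≤ ∏ p ∈ s, p := by
    calc 2 ^ N = ∏ _p ∈ s, 2 := by rw [Finset.prod_const, hcard]
      _ ≤ ∏ p ∈ s, p := Finset.prod_le_prod (fun _ _ => by norm_num)
          (fun p hp => (hprime p hp).two_le)
  have : ∏ p ∈ s, p ≤ D := Nat.le_of_dvd hDpos hprod_dvd
  have hN1 : 2 ^ (N - 1) < 2 ^ N := Nat.pow_lt_pow_right one_lt_two (by omega)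
  omega
end

section
/- Let w be a basis isolating weight assignment for a V-valued n-variate polynomial D, and let λ : V → F be an F-linear map such that λ(D(e)) ≠ 0 for some exponent vector e. Then the univariate polynomial ∑_e λ(D(e))·t^{w(e)} ∈ F[t] (the result of substituting x_i = t^{w(i)} into the scalar polynomial with coefficients λ(D(e))) is nonzero. -/
/-- The weight of an exponent vector `e` under a weight function `w` on the variables:
`w(e) = ∑ i, e i * w i`. -/
def expWeight {n : ℕ} (w : Fin n → ℕ) (e : Fin n → ℕ) : ℕ := ∑ i, e i * w i

/-- `w` is a basis isolating weight assignment for the `V`-valued `n`-variate polynomial `D`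
(a finitely supported coefficient function): there is a finite set `S` of exponent vectors
whose coefficients form a basis of the span of all coefficients of `D`, the weights of the
members of `S` are pairwise distinct, and the coefficient of any `e ∉ S` is in the span of
the coefficients of those `e' ∈ S` of strictly smaller weight. -/
def IsBasisIsolating (F : Type*) {V : Type*} [Field F] [AddCommGroup V] [Module F V]
    {n : ℕ} (w : Fin n → ℕ) (D : (Fin n → ℕ) →₀ V) : Prop :=
  ∃ S : Finset (Fin n → ℕ),
    LinearIndependent F (fun e : {x // x ∈ S} => D e.1) ∧
    Submodule.span F (⇑D '' ↑S) = Submodule.span F (Set.range ⇑D) ∧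
    Set.InjOn (expWeight w) ↑S ∧
    ∀ e ∉ S, D e ∈ Submodule.span F
      (⇑D '' {e' | e' ∈ S ∧ expWeight w e' < expWeight w e})

/-- If `w` is a basis isolating weight assignment for `D` and `λ` is a linear functional
not vanishing on all coefficients of `D`, then the univariate polynomial obtained by
substituting `x_i = t^{w i}` into `∑_e λ(D e)·x^e`, namely `∑_e λ(D e)·t^{w(e)}`,
is nonzero. -/
theorem basis_isolating_hits (F V : Type*) [Field F] [AddCommGroup V] [Module F V]
    (n : ℕ) (w : Fin n → ℕ) (D : (Fin n → ℕ) →₀ V)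
    (hw : IsBasisIsolating F w D)
    (lam : V →ₗ[F] F) (e₀ : Fin n → ℕ) (he₀ : lam (D e₀) ≠ 0) :
    (∑ e ∈ D.support, Polynomial.C (lam (D e)) * Polynomial.X ^ expWeight w e)
      ≠ (0 : Polynomial F) := by
  obtain ⟨S, _hind, hspan, hinj, hlow⟩ := hw
  classical
  -- the set of elements of S where lam ∘ D doesn't vanish
  set T : Finset (Fin n → ℕ) := S.filter (fun s => lam (D s) ≠ 0) with hT
  have hTne : T.Nonempty := by
    by_contra h
    rw [Finset.not_nonempty_iff_eq_empty] at h
    have hsub : (⇑D '' ↑S) ⊆ (LinearMap.ker lam : Set V) := by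
      rintro _ ⟨s, hs, rfl⟩
      have : s ∉ T := by simp [h]
      simp only [hT, Finset.mem_filter, not_and, not_not] at this
      exact this hs
    have hle : Submodule.span F (⇑D '' ↑S) ≤ LinearMap.ker lam :=
      Submodule.span_le.mpr hsub
    rw [hspan] at hle
    have : D e₀ ∈ Submodule.span F (Set.range ⇑D) :=
      Submodule.subset_span ⟨e₀, rfl⟩
    exact he₀ (hle this)
  -- minimal weight among T
  obtain ⟨m, hmmem, hmmin⟩ := (T.image (expWeight w)).exists_min_image id
    (hTne.image _)
  simp only [id] at hmmin
  obtain ⟨s, hsT, hsm⟩ := Finset.mem_image.mp hmmem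
  rw [hT, Finset.mem_filter] at hsT
  have hsS : s ∈ S := hsT.1
  have hslam : lam (D s) ≠ 0 := hsT.2
  have hmin : ∀ e ∈ S, lam (D e) ≠ 0 → m ≤ expWeight w e := by
    intro e heS hel
    exact hmmin _ (Finset.mem_image_of_mem _ (Finset.mem_filter.mpr ⟨heS, hel⟩))
  -- if weight < m and e ∈ S then lam (D e) = 0
  have hzero : ∀ e ∈ S, expWeight w e < m → lam (D e) = 0 := by
    intro e heS hlt
    by_contra h
    exact absurd (hmin e heS h) (not_le.mpr hlt)
  -- for e with weight m, lam (D e) = 0 unless e = s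
  have hkey : ∀ e, expWeight w e = m → e ≠ s → lam (D e) = 0 := by
    intro e hem hes
    by_cases heS : e ∈ S
    · exact absurd (hinj heS hsS (hem.trans hsm.symm)) hes
    · have hmem := hlow e heS
      have hsub : (⇑D '' {e' | e' ∈ S ∧ expWeight w e' < expWeight w e})
          ⊆ (LinearMap.ker lam : Set V) := by
        rintro _ ⟨e', ⟨he'S, he'lt⟩, rfl⟩
        exact hzero e' he'S (hem ▸ he'lt)
      exact Submodule.span_le.mpr hsub hmem
  -- s is in the support
  have hssupp : s ∈ D.support := by
    rw [Finsupp.mem_support_iff]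
    intro h
    exact hslam (by rw [h, map_zero])
  intro hpoly
  have hc : (∑ e ∈ D.support,
      Polynomial.C (lam (D e)) * Polynomial.X ^ expWeight w e).coeff m = lam (D s) := by
    rw [Polynomial.finset_sum_coeff]
    simp only [Polynomial.coeff_C_mul, Polynomial.coeff_X_pow, mul_ite, mul_one, mul_zero]
    rw [Finset.sum_eq_single_of_mem s hssupp]
    · simp [hsm]
    · intro e _ hes
      by_cases hem : expWeight w e = m
      · simp only [if_pos hem.symm, hkey e hem hes]
      · rw [if_neg (fun h => hem h.symm)]
  rw [hpoly, Polynomial.coeff_zero] at hc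
  exact hslam hc.symm
end

section
/- For every n ≥ 1 and any two partitions P_1, P_2 of an n-element set S, there exists a partition of S into fewer than 2·√n blocks such that for every block B of this partition, either P_1|_B refines P_2|_B or P_2|_B refines P_1|_B. -/
/-!
Put `m = ⌊√n⌋` and call a part of `P₁` big if it has more than `m` elements. Every big part
becomes a block; they are disjoint and each has more than `√n` elements, so there are fewer than
`√n` of them. The remaining points are sorted into `m` blocks by their rank inside their own
(small) part of `P₁`, so each of these blocks meets every part of `P₁` at most once. On a block
contained in a part of `P₁` the restriction of `P₂` refines that of `P₁`; on a block meeting each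
part of `P₁` at most once it is the other way round.
-/

open Finset

/-- `P|_B` refines `P'|_B`: every nonempty part `Y ∩ B` of the restriction of `P` to `B` is
contained in some part `Z ∩ B` of the restriction of `P'` to `B`. -/
def RestrRefines {α : Type*} [Fintype α] [DecidableEq α]
    (P P' : Finpartition (Finset.univ : Finset α)) (B : Finset α) : Prop :=
  ∀ Y ∈ P.parts, (Y ∩ B).Nonempty → ∃ Z ∈ P'.parts, Y ∩ B ⊆ Z ∩ B

lemma Finset.strictMonoOn_card_filter_lt {α : Type*} [LinearOrder α] (t : Finset α) :
    StrictMonoOn (fun x ↦ #{y ∈ t | y < x}) t := by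
  intro x hx y _ hxy
  refine card_lt_card ((ssubset_iff_of_subset fun z hz ↦ ?_).2 ⟨x, ?_, ?_⟩)
  · simp only [mem_filter] at hz ⊢
    exact ⟨hz.1, hz.2.trans hxy⟩
  · exact mem_filter.2 ⟨hx, hxy⟩
  · simp

lemma Finset.card_filter_lt_lt_card {α : Type*} [LinearOrder α] {t : Finset α} {x : α}
    (hx : x ∈ t) : #{y ∈ t | y < x} < #t :=
  card_lt_card (filter_ssubset.2 ⟨x, hx, lt_irrefl x⟩)

namespace Finpartition

variable {α : Type*} [DecidableEq α]

theorem exists_rank_injOn_part {s : Finset α} (P : Finpartition s) :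
    ∃ r : α → ℕ, (∀ a ∈ s, r a < #(P.part a)) ∧
      ∀ a ∈ s, ∀ b ∈ s, P.part a = P.part b → r a = r b → a = b := by
  let : LinearOrder α := IsWellOrder.linearOrder WellOrderingRel
  refine ⟨fun a ↦ #{y ∈ P.part a | y < a}, fun a ha ↦ card_filter_lt_lt_card (P.mem_part ha),
    fun a ha b hb hab hr ↦ ?_⟩
  have hb' : b ∈ P.part a := hab ▸ P.mem_part hb
  exact (strictMonoOn_card_filter_lt _).injOn (P.mem_part ha) hb' (by simpa [hab] using hr)

theorem mul_card_filter_parts_le_card {s : Finset α} (P : Finpartition s) (k : ℕ) :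
    k * #{t ∈ P.parts | k ≤ #t} ≤ #s := by
  calc k * #{t ∈ P.parts | k ≤ #t}
      ≤ ∑ t ∈ P.parts with k ≤ #t, #t := by
        simpa [mul_comm] using card_nsmul_le_sum _ card k fun t ht ↦ (mem_filter.1 ht).2
    _ ≤ ∑ t ∈ P.parts, #t := sum_le_sum_of_subset (filter_subset _ _)
    _ = #s := P.sum_card_parts

variable [Fintype α]

theorem card_parts_ofSetoid_ker_le {β : Type*} [DecidableEq β] (f : α → β)
    [DecidableRel (Setoid.ker f).r] : #(ofSetoid (Setoid.ker f)).parts ≤ #(univ.image f) := by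
  have : (fun a : α ↦ {b ∈ (univ : Finset α) | Setoid.ker f a b}) =
      (fun v : β ↦ ({b | v = f b} : Finset α)) ∘ f := by
    ext; simp [Setoid.ker_def]
  rw [ofSetoid, ofSetSetoid_parts, this, ← image_image]
  exact card_image_le

theorem mem_of_mem_parts_ofSetoid_ker {β : Type*} {f : α → β} [DecidableRel (Setoid.ker f).r]
    {B : Finset α} (hB : B ∈ (ofSetoid (Setoid.ker f)).parts) {x y : α} (hx : x ∈ B) :
    y ∈ B ↔ f x = f y := by
  rw [← (ofSetoid _).part_eq_of_mem hB hx, mem_part_ofSetoid_iff_rel, Setoid.ker_def]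

theorem exists_finpartition_subset_or_transversal (P : Finpartition (univ : Finset α)) (m : ℕ) :
    ∃ Q : Finpartition (univ : Finset α), #Q.parts ≤ #{t ∈ P.parts | m < #t} + m ∧
      ∀ B ∈ Q.parts, (∃ Z ∈ P.parts, B ⊆ Z) ∨ ∀ Y ∈ P.parts, #(Y ∩ B) ≤ 1 := by
  classical
  obtain ⟨r, hr_lt, hr_inj⟩ := P.exists_rank_injOn_part
  let label (x : α) : Finset α ⊕ ℕ := if m < #(P.part x) then .inl (P.part x) else .inr (r x)
  refine ⟨ofSetoid (Setoid.ker label), ?_, fun B hB ↦ ?_⟩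
  · have hrange : univ.image label ⊆
        {t ∈ P.parts | m < #t}.image .inl ∪ (range m).image .inr := by
      simp only [subset_iff, mem_image, mem_univ, true_and, forall_exists_index,
        forall_apply_eq_imp_iff]
      intro x
      by_cases hx : m < #(P.part x)
      · simp only [label, if_pos hx]
        exact mem_union_left _ (mem_image_of_mem _ (mem_filter.2 ⟨P.part_mem.2 (mem_univ x), hx⟩))
      · simp only [label, if_neg hx]
        refine mem_union_right _ (mem_image_of_mem _ (mem_range.2 ?_))
        exact (hr_lt x (mem_univ x)).trans_le (not_lt.1 hx)
    calc #(ofSetoid (Setoid.ker label)).parts ≤ #(univ.image label) :=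
          card_parts_ofSetoid_ker_le label
      _ ≤ #({t ∈ P.parts | m < #t}.image .inl ∪ (range m).image .inr) := card_le_card hrange
      _ ≤ #{t ∈ P.parts | m < #t} + m := by
          grw [card_union_le, card_image_le, card_image_le, card_range]
  · obtain ⟨x, hx⟩ := (ofSetoid _).nonempty_of_mem_parts hB
    have hlabel {y : α} (hy : y ∈ B) : label x = label y :=
      (mem_of_mem_parts_ofSetoid_ker hB hx).1 hy
    by_cases hbig : m < #(P.part x)
    · refine .inl ⟨P.part x, P.part_mem.2 (mem_univ x), fun y hy ↦ ?_⟩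
      have hxy := hlabel hy
      simp only [label, if_pos hbig] at hxy
      split_ifs at hxy
      rw [Sum.inl.inj hxy]
      exact P.mem_part (mem_univ y)
    · have hrank {y : α} (hy : y ∈ B) : r y = r x := by
        have hxy := hlabel hy
        simp only [label, if_neg hbig] at hxy
        split_ifs at hxy
        exact (Sum.inr.inj hxy).symm
      refine .inr fun Y hY ↦ card_le_one.2 fun a ha b hb ↦ ?_
      rw [mem_inter] at ha hb
      refine hr_inj a (mem_univ a) b (mem_univ b) ?_ ((hrank ha.2).trans (hrank hb.2).symm)
      rw [P.part_eq_of_mem hY ha.1, P.part_eq_of_mem hY hb.1]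

end Finpartition

lemma Nat.cast_add_sqrt_lt_two_mul_sqrt {n k : ℕ} (hn : 1 ≤ n) (hk : k * (Nat.sqrt n + 1) ≤ n) :
    (k + Nat.sqrt n : ℝ) < 2 * √n := by
  have hkk : k * k < n := by
    rcases Nat.eq_zero_or_pos k with rfl | hk0
    · omega
    have hks : k < Nat.sqrt n + 1 := by nlinarith [Nat.lt_succ_sqrt n]
    exact (Nat.mul_lt_mul_left hk0).2 hks |>.trans_le hk
  have : (k : ℝ) < √n := Real.lt_sqrt_of_sq_lt (by exact_mod_cast (sq k).symm ▸ hkk)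
  linarith [Real.nat_sqrt_le_real_sqrt (a := n)]

theorem restrRefines_of_subset_mem_parts {α : Type*} [Fintype α] [DecidableEq α]
    {P P' : Finpartition (univ : Finset α)} {B Z : Finset α} (hZ : Z ∈ P'.parts) (hB : B ⊆ Z) :
    RestrRefines P P' B :=
  fun _ _ _ ↦ ⟨Z, hZ, subset_inter (inter_subset_right.trans hB) inter_subset_right⟩

theorem restrRefines_of_card_inter_le_one {α : Type*} [Fintype α] [DecidableEq α]
    {P P' : Finpartition (univ : Finset α)} {B : Finset α} (h : ∀ Y ∈ P.parts, #(Y ∩ B) ≤ 1) :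
    RestrRefines P P' B := by
  rintro Y hY ⟨x, hx⟩
  refine ⟨P'.part x, P'.part_mem.2 (mem_univ x), fun y hy ↦ ?_⟩
  rw [card_le_one.1 (h Y hY) y hy x hx]
  exact mem_inter.2 ⟨P'.mem_part (mem_univ x), (mem_inter.1 hx).2⟩

/-- Any two partitions of an `n`-element set admit a common partition into fewer than
`2·√n` blocks on each of which one of the two restricted partitions refines the other. -/
theorem two_partitions_base_sets (α : Type*) [Fintype α] [DecidableEq α] (n : ℕ)
    (hn : 1 ≤ n) (hcard : Fintype.card α = n)
    (P₁ P₂ : Finpartition (Finset.univ : Finset α)) :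
    ∃ Q : Finpartition (Finset.univ : Finset α),
      (Q.parts.card : ℝ) < 2 * Real.sqrt n ∧
      ∀ B ∈ Q.parts, RestrRefines P₁ P₂ B ∨ RestrRefines P₂ P₁ B := by
  obtain ⟨Q, hQcard, hQ⟩ := P₁.exists_finpartition_subset_or_transversal (Nat.sqrt n)
  refine ⟨Q, ?_, fun B hB ↦ ?_⟩
  · have hbig := P₁.mul_card_filter_parts_le_card (Nat.sqrt n + 1)
    rw [card_univ, hcard, mul_comm] at hbig
    calc (#Q.parts : ℝ) ≤ #{t ∈ P₁.parts | Nat.sqrt n < #t} + Nat.sqrt n := by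
          exact_mod_cast hQcard
      _ < 2 * √n := Nat.cast_add_sqrt_lt_two_mul_sqrt hn hbig
  · obtain ⟨Z, hZ, hBZ⟩ | htrans := hQ B hB
    · exact .inr (restrRefines_of_subset_mem_parts hZ hBZ)
    · exact .inl (restrRefines_of_card_inter_le_one htrans)
end

section
/- Let n = s² for an integer s ≥ 1, and consider the set {1,...,n}. Let P_1 be the partition whose parts are the s consecutive intervals {(a-1)·s + 1, ..., a·s} for a ∈ {1,...,s}, and let P_2 be the partition whose parts are the residue classes modulo s. If B ⊆ {1,...,n} is a subset such that P_1|_B refines P_2|_B, then |B| ≤ s. -/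
open Finset

/-- Tightness example: on `{0,…,s²-1}`, let `P₁` have as parts the `s` consecutive
intervals (classes of `j ↦ j / s`) and `P₂` the residue classes modulo `s` (classes of
`j ↦ j % s`). If `B` is a subset on which `P₁|_B` refines `P₂|_B` — i.e. every nonempty
intersection of an interval with `B` is contained in a single residue class — then
`|B| ≤ s`. -/
theorem interval_residue_base_set_small (s : ℕ) (hs : 1 ≤ s) (B : Finset (Fin (s * s)))
    (href : ∀ a : ℕ,
      ((Finset.univ.filter fun j : Fin (s * s) => (j : ℕ) / s = a) ∩ B).Nonempty →
      ∃ r : ℕ, ((Finset.univ.filter fun j : Fin (s * s) => (j : ℕ) / s = a) ∩ B) ⊆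
        (Finset.univ.filter fun j : Fin (s * s) => (j : ℕ) % s = r)) :
    B.card ≤ s := by
  have hinj : Set.InjOn (fun j : Fin (s * s) => (j : ℕ) / s) B := by
    intro j hj k hk hjk
    simp only at hjk
    replace hj : j ∈ B := hj
    replace hk : k ∈ B := hk
    obtain ⟨r, hr⟩ := href ((j : ℕ) / s) ⟨j, by simp [hj]⟩
    have hjr : (j : ℕ) % s = r := by
      have := hr (Finset.mem_inter.mpr ⟨by simp, hj⟩); simpa using this
    have hkr : (k : ℕ) % s = r := by
      have := hr (Finset.mem_inter.mpr ⟨by simp [hjk], hk⟩); simpa using this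
    have : (j : ℕ) = (k : ℕ) := by
      rw [← Nat.div_add_mod (j : ℕ) s, ← Nat.div_add_mod (k : ℕ) s, hjk, hjr, hkr]
    exact Fin.ext this
  calc B.card = (B.image fun j : Fin (s * s) => (j : ℕ) / s).card :=
        (Finset.card_image_of_injOn hinj).symm
    _ ≤ (Finset.range s).card := by
        apply Finset.card_le_card
        intro x hx
        simp only [Finset.mem_image] at hx
        obtain ⟨j, _, rfl⟩ := hx
        exact Finset.mem_range.2 (Nat.div_lt_of_lt_mul j.isLt)
    _ = s := Finset.card_range s
end

section
/- Assume each constant-term matrix D_{i,0} (the entrywise coefficient of the constant monomial in D_i) is invertible in F^{w×w}. Let e and e* be exponent vectors with bS(e) nonempty such that e*_i = e_i for all i ≠ j, bS(e*) = bS(e) ∪ {j}, and either j > max bS(e) or j < min bS(e) (i.e., D_{e*} is a parent of D_e). If D_e lies in the F-span of {D_f : bS(f) ⊊ bS(e)}, then D_{e*} lies in the F-span of {D_f : bS(f) ⊊ bS(e*)}. -/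
open Finset

/-- The block-support `bS(e)` of an exponent vector `e`: the set of blocks `i` (under the
block assignment `π` of variables to blocks) on which `e` is not identically zero. -/
def blockSupport {n d : ℕ} (π : Fin n → Fin d) (e : Fin n → ℕ) : Finset (Fin d) :=
  Finset.univ.filter fun i => ∃ j, π j = i ∧ e j ≠ 0

/-- The monomial `x_i^{e_i}`: the restriction of the exponent vector `e` to block `i`. -/
noncomputable def blockMonomial {n d : ℕ} (π : Fin n → Fin d) (i : Fin d) (e : Fin n → ℕ) :
    Fin n →₀ ℕ :=
  Finsupp.equivFunOnFinite.symm fun j => if π j = i then e j else 0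

/-- `D_e = D_{1,e_1}·D_{2,e_2}⋯D_{d,e_d}`, the coefficient of `x^e` in the matrix product
`D_1·D_2⋯D_d` (the variable sets of the factors being disjoint). -/
noncomputable def blockCoeff {F : Type*} [Field F] {w n d : ℕ} (π : Fin n → Fin d)
    (D : Fin d → Matrix (Fin w) (Fin w) (MvPolynomial (Fin n) F)) (e : Fin n → ℕ) :
    Matrix (Fin w) (Fin w) F :=
  ((List.finRange d).map fun i =>
    (D i).map (MvPolynomial.coeff (blockMonomial π i e))).prod

section Aux

variable {F : Type*} [Field F] {w n d : ℕ} (π : Fin n → Fin d)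
  (D : Fin d → Matrix (Fin w) (Fin w) (MvPolynomial (Fin n) F))

lemma mem_take_finRange {k : ℕ} {i : Fin d} (h : i ∈ (List.finRange d).take k) : (i:ℕ) < k := by
  rw [List.mem_iff_getElem] at h
  obtain ⟨m, hm, rfl⟩ := h
  simp at hm ⊢
  omega

lemma mem_drop_finRange {k : ℕ} {i : Fin d} (h : i ∈ (List.finRange d).drop k) : k ≤ (i:ℕ) := by
  rw [List.mem_iff_getElem] at h
  obtain ⟨m, hm, rfl⟩ := h
  simp at hm ⊢
  try omega

lemma blockMonomial_congr {i : Fin d} {g h : Fin n → ℕ}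
    (hgh : ∀ l, π l = i → g l = h l) :
    blockMonomial π i g = blockMonomial π i h := by
  unfold blockMonomial
  congr 1
  funext l
  by_cases hl : π l = i
  · simp [hl, hgh l hl]
  · simp [hl]

lemma blockMonomial_eq_zero {i : Fin d} {g : Fin n → ℕ}
    (hi : i ∉ blockSupport π g) : blockMonomial π i g = 0 := by
  simp only [blockSupport, Finset.mem_filter, Finset.mem_univ, true_and, not_exists] at hi
  unfold blockMonomial
  ext l
  by_cases hl : π l = i
  · have h2 := hi l
    rw [hl] at h2
    simp only [ne_eq, not_and, not_not] at h2
    simp [hl, h2 trivial]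
  · simp [hl]

/-- shorthand for the `i`-th factor of `blockCoeff` -/
noncomputable def bFac (g : Fin n → ℕ) (i : Fin d) : Matrix (Fin w) (Fin w) F :=
  (D i).map (MvPolynomial.coeff (blockMonomial π i g))

lemma bFac_congr {i : Fin d} {g h : Fin n → ℕ} (hgh : ∀ l, π l = i → g l = h l) :
    bFac π D g i = bFac π D h i := by
  unfold bFac
  rw [blockMonomial_congr π hgh]

lemma bFac_const {i : Fin d} {g : Fin n → ℕ} (hi : i ∉ blockSupport π g) :
    bFac π D g i = (D i).map (MvPolynomial.coeff (0 : Fin n →₀ ℕ)) := by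
  unfold bFac
  rw [blockMonomial_eq_zero π hi]

lemma blockCoeff_split (g : Fin n → ℕ) (j : Fin d) :
    blockCoeff π D g =
      (((List.finRange d).take j).map (bFac π D g)).prod * bFac π D g j *
      (((List.finRange d).drop (j+1)).map (bFac π D g)).prod := by
  have hsplit : List.finRange d =
      (List.finRange d).take j ++ j :: (List.finRange d).drop (j+1) := by
    conv_lhs => rw [← List.take_append_drop (j:ℕ) (List.finRange d)]
    rw [List.drop_eq_getElem_cons (by simp [j.2])]
    simp
  unfold blockCoeff
  conv_lhs => rw [hsplit]
  rw [List.map_append, List.prod_append, List.map_cons, List.prod_cons]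
  rw [mul_assoc]
  rfl

lemma blockSupport_update (g : Fin n → ℕ) (j : Fin d) {estar : Fin n → ℕ}
    (hj : j ∈ blockSupport π estar) :
    blockSupport π (fun l => if π l = j then estar l else g l) =
      insert j (blockSupport π g) := by
  ext i
  simp only [blockSupport, Finset.mem_filter, Finset.mem_univ, true_and,
    Finset.mem_insert] at hj ⊢
  constructor
  · rintro ⟨l, hl, hne⟩
    by_cases h : π l = j
    · left; rw [← hl, h]
    · right; exact ⟨l, hl, by simpa [h] using hne⟩
  · rintro (rfl | ⟨l, hl, hne⟩)
    · obtain ⟨l, hl, hne⟩ := hj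
      exact ⟨l, hl, by simp [hl, hne]⟩
    · by_cases h : π l = j
      · obtain ⟨l', hl', hne'⟩ := hj
        refine ⟨l', by rw [hl', ← h, hl], by simp [hl', hne']⟩
      · exact ⟨l, hl, by simpa [h] using hne⟩

end Aux

/-- Lifting linear dependence from a child to its parent: if all constant-term matrices
`D_{i,0}` are invertible, `D_{e*}` is a parent of `D_e` (with `bS(e)` nonempty), and `D_e`
is in the span of the coefficients with strictly smaller block-support, then so is
`D_{e*}`. -/
theorem child_to_parent (F : Type*) [Field F] (w n d : ℕ) (hw : 1 ≤ w) (hd : 1 ≤ d)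
    (π : Fin n → Fin d)
    (D : Fin d → Matrix (Fin w) (Fin w) (MvPolynomial (Fin n) F))
    -- each `D i` only involves the variables of block `i`
    (hvars : ∀ i a b, ∀ j ∈ (D i a b).vars, π j = i)
    -- each constant-term matrix `D_{i,0}` is invertible
    (hinv : ∀ i, IsUnit ((D i).map (MvPolynomial.coeff (0 : Fin n →₀ ℕ))))
    (e estar : Fin n → ℕ) (j : Fin d)
    (hne : (blockSupport π e).Nonempty)
    (heq : ∀ l : Fin n, π l ≠ j → estar l = e l)
    (hbs : blockSupport π estar = insert j (blockSupport π e))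
    (hj : (∀ i ∈ blockSupport π e, (i : ℕ) < (j : ℕ)) ∨
          (∀ i ∈ blockSupport π e, (j : ℕ) < (i : ℕ)))
    (hdep : blockCoeff π D e ∈ Submodule.span F
      {M | ∃ f, blockSupport π f ⊂ blockSupport π e ∧ M = blockCoeff π D f}) :
    blockCoeff π D estar ∈ Submodule.span F
      {M | ∃ f, blockSupport π f ⊂ blockSupport π estar ∧ M = blockCoeff π D f} := by
  classical
  set C0 : Fin d → Matrix (Fin w) (Fin w) F :=
    fun i => (D i).map (MvPolynomial.coeff (0 : Fin n →₀ ℕ)) with hC0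
  have hjs : j ∈ blockSupport π estar := by rw [hbs]; exact Finset.mem_insert_self _ _
  have hjne : j ∉ blockSupport π e := by
    intro h
    rcases hj with hj | hj
    · exact lt_irrefl _ (hj j h)
    · exact lt_irrefl _ (hj j h)
  -- the modified exponent vector `g*`
  set star : (Fin n → ℕ) → (Fin n → ℕ) :=
    fun g l => if π l = j then estar l else g l with hstar
  have hstar_bs : ∀ g, blockSupport π (star g) = insert j (blockSupport π g) :=
    fun g => blockSupport_update π g j hjs
  have hstar_eqj : ∀ g l, π l = j → star g l = estar l := by
    intro g l hl; simp [hstar, hl]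
  have hstar_eq : ∀ g l, π l ≠ j → star g l = g l := by
    intro g l hl; simp [hstar, hl]
  have hestar_star : ∀ l, estar l = star e l := by
    intro l
    by_cases hl : π l = j
    · simp [hstar, hl]
    · simp [hstar, hl, heq l hl]
  -- the `j`-th factor of D_{e*}
  set M : Matrix (Fin w) (Fin w) F := bFac π D estar j with hM
  have hfacj : ∀ g, bFac π D (star g) j = M := by
    intro g
    exact bFac_congr π D (fun l hl => hstar_eqj g l hl)
  rcases hj with hj | hj
  · -- case: j greater than everything in bS(e)
    -- suffix product is the constant product
    set B : Matrix (Fin w) (Fin w) F :=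
      (((List.finRange d).drop (j+1)).map C0).prod with hB
    have hBunit : IsUnit B := List.prod_isUnit (by
      intro m hm
      rw [List.mem_map] at hm
      obtain ⟨i, _, rfl⟩ := hm
      exact hinv i)
    have hZunit : IsUnit (C0 j) := hinv j
    set u : (Matrix (Fin w) (Fin w) F)ˣ := hZunit.unit * hBunit.unit with hu
    have hucoe : (u : Matrix (Fin w) (Fin w) F) = C0 j * B := by simp [hu]
    -- key computation lemmas
    have key : ∀ g : Fin n → ℕ, (∀ i ∈ blockSupport π g, (i:ℕ) < (j:ℕ)) →
        blockCoeff π D g =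
          (((List.finRange d).take j).map (bFac π D g)).prod * u ∧
        blockCoeff π D (star g) =
          (((List.finRange d).take j).map (bFac π D g)).prod * (M * B) := by
      intro g hg
      have hsufg : ∀ h : Fin n → ℕ, (∀ i ∈ blockSupport π h, (i:ℕ) ≤ (j:ℕ)) →
          (((List.finRange d).drop (j+1)).map (bFac π D h)).prod = B := by
        intro h hh
        rw [hB]
        congr 1
        apply List.map_congr_left
        intro i hi
        have hij : (j:ℕ) + 1 ≤ (i:ℕ) := mem_drop_finRange hi
        apply bFac_const
        intro hmem
        have := hh i hmem
        omega
      have htake : (((List.finRange d).take j).map (bFac π D (star g))).prod =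
          (((List.finRange d).take j).map (bFac π D g)).prod := by
        congr 1
        apply List.map_congr_left
        intro i hi
        have hij : (i:ℕ) < (j:ℕ) := mem_take_finRange hi
        apply bFac_congr
        intro l hl
        apply hstar_eq
        intro hlj
        rw [hl] at hlj
        subst hlj
        omega
      constructor
      · rw [blockCoeff_split π D g j, hucoe, ← mul_assoc]
        congr 1
        · congr 1
          exact bFac_const π D (fun hmem => by have := hg j hmem; omega)
        · rw [hsufg g (fun i hi => le_of_lt (hg i hi))]
      · rw [blockCoeff_split π D (star g) j, hfacj g, htake, ← mul_assoc]
        congr 1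
        rw [hsufg (star g)]
        intro i hi
        rw [hstar_bs g] at hi
        rcases Finset.mem_insert.mp hi with rfl | hi
        · omega
        · exact le_of_lt (hg i hi)
    set R : Matrix (Fin w) (Fin w) F := (↑u⁻¹ : Matrix (Fin w) (Fin w) F) * (M * B) with hR
    have keyR : ∀ g : Fin n → ℕ, (∀ i ∈ blockSupport π g, (i:ℕ) < (j:ℕ)) →
        blockCoeff π D (star g) = blockCoeff π D g * R := by
      intro g hg
      obtain ⟨h1, h2⟩ := key g hg
      rw [h1, h2, hR, mul_assoc, Units.mul_inv_cancel_left]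
    have hestar : blockCoeff π D estar = blockCoeff π D e * R := by
      have hes : estar = star e := funext hestar_star
      rw [hes]
      exact keyR e hj
    -- transfer the span membership
    rw [hestar]
    have := Submodule.mem_map_of_mem (f := LinearMap.mulRight F R) hdep
    rw [Submodule.map_span] at this
    simp only [LinearMap.mulRight_apply] at this
    refine Submodule.span_mono ?_ this
    rintro x ⟨y, ⟨f, hf, rfl⟩, rfl⟩
    refine ⟨star f, ?_, ?_⟩
    · rw [hstar_bs f, hbs]
      obtain ⟨hsub, hne2⟩ := Finset.ssubset_iff_subset_ne.mp hf
      refine Finset.ssubset_iff_subset_ne.mpr ⟨Finset.insert_subset_insert _ hsub, ?_⟩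
      intro hEq
      obtain ⟨x0, hx0e, hx0f⟩ := Finset.exists_of_ssubset hf
      have hx0j : x0 ≠ j := by intro h; subst h; exact hjne hx0e
      have : x0 ∈ insert j (blockSupport π f) := by
        rw [hEq]; exact Finset.mem_insert_of_mem hx0e
      rcases Finset.mem_insert.mp this with h | h
      · exact hx0j h
      · exact hx0f h
    · simp only [LinearMap.mulRight_apply]
      exact (keyR f (fun i hi => hj i (hf.1 hi))).symm
  · -- case: j smaller than everything in bS(e)
    set B : Matrix (Fin w) (Fin w) F :=
      (((List.finRange d).take j).map C0).prod with hB
    have hBunit : IsUnit B := List.prod_isUnit (by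
      intro m hm
      rw [List.mem_map] at hm
      obtain ⟨i, _, rfl⟩ := hm
      exact hinv i)
    have hZunit : IsUnit (C0 j) := hinv j
    set u : (Matrix (Fin w) (Fin w) F)ˣ := hBunit.unit * hZunit.unit with hu
    have hucoe : (u : Matrix (Fin w) (Fin w) F) = B * C0 j := by simp [hu]
    have key : ∀ g : Fin n → ℕ, (∀ i ∈ blockSupport π g, (j:ℕ) < (i:ℕ)) →
        blockCoeff π D g =
          u * (((List.finRange d).drop (j+1)).map (bFac π D g)).prod ∧
        blockCoeff π D (star g) =
          (B * M) * (((List.finRange d).drop (j+1)).map (bFac π D g)).prod := by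
      intro g hg
      have hpreg : ∀ h : Fin n → ℕ, (∀ i ∈ blockSupport π h, (j:ℕ) ≤ (i:ℕ)) →
          (((List.finRange d).take j).map (bFac π D h)).prod = B := by
        intro h hh
        rw [hB]
        congr 1
        apply List.map_congr_left
        intro i hi
        have hij : (i:ℕ) < (j:ℕ) := mem_take_finRange hi
        apply bFac_const
        intro hmem
        have := hh i hmem
        omega
      have hdropg : (((List.finRange d).drop (j+1)).map (bFac π D (star g))).prod =
          (((List.finRange d).drop (j+1)).map (bFac π D g)).prod := by
        congr 1
        apply List.map_congr_left
        intro i hi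
        have hij : (j:ℕ)+1 ≤ (i:ℕ) := mem_drop_finRange hi
        apply bFac_congr
        intro l hl
        apply hstar_eq
        intro hlj
        rw [hl] at hlj
        subst hlj
        omega
      constructor
      · rw [blockCoeff_split π D g j, hpreg g (fun i hi => le_of_lt (hg i hi)),
          bFac_const π D (g := g) (i := j) (fun hmem => by have := hg j hmem; omega), hucoe,
          mul_assoc]
      · rw [blockCoeff_split π D (star g) j, hfacj g, hdropg]
        congr 1
        congr 1
        apply hpreg (star g)
        intro i hi
        rw [hstar_bs g] at hi
        rcases Finset.mem_insert.mp hi with rfl | hi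
        · omega
        · exact le_of_lt (hg i hi)
    set L : Matrix (Fin w) (Fin w) F := (B * M) * (↑u⁻¹ : Matrix (Fin w) (Fin w) F) with hL
    have keyL : ∀ g : Fin n → ℕ, (∀ i ∈ blockSupport π g, (j:ℕ) < (i:ℕ)) →
        blockCoeff π D (star g) = L * blockCoeff π D g := by
      intro g hg
      obtain ⟨h1, h2⟩ := key g hg
      rw [h1, h2, hL, mul_assoc (B * M), Units.inv_mul_cancel_left]
    have hestar : blockCoeff π D estar = L * blockCoeff π D e := by
      have hes : estar = star e := funext hestar_star
      rw [hes]
      exact keyL e hj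
    rw [hestar]
    have := Submodule.mem_map_of_mem (f := LinearMap.mulLeft F L) hdep
    rw [Submodule.map_span] at this
    simp only [LinearMap.mulLeft_apply] at this
    refine Submodule.span_mono ?_ this
    rintro x ⟨y, ⟨f, hf, rfl⟩, rfl⟩
    refine ⟨star f, ?_, ?_⟩
    · rw [hstar_bs f, hbs]
      obtain ⟨hsub, hne2⟩ := Finset.ssubset_iff_subset_ne.mp hf
      refine Finset.ssubset_iff_subset_ne.mpr ⟨Finset.insert_subset_insert _ hsub, ?_⟩
      intro hEq
      obtain ⟨x0, hx0e, hx0f⟩ := Finset.exists_of_ssubset hf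
      have hx0j : x0 ≠ j := by intro h; subst h; exact hjne hx0e
      have : x0 ∈ insert j (blockSupport π f) := by
        rw [hEq]; exact Finset.mem_insert_of_mem hx0e
      rcases Finset.mem_insert.mp this with h | h
      · exact hx0j h
      · exact hx0f h
    · simp only [LinearMap.mulLeft_apply]
      exact (keyL f (fun i hi => hj i (hf.1 hi))).symm
end

section
/- Assume each constant-term matrix D_{i,0} (the entrywise coefficient of the constant monomial in D_i) is invertible in F^{w×w}. Then every exponent vector e with bs(e) = w² satisfies: D_e lies in the F-span of {D_f : bS(f) ⊊ bS(e)}. -/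
open Finset

/-!
Write `X_U` for the product `D_{1,•}⋯D_{d,•}` that takes the `e`-coefficient of `D_i` for
`i ∈ U` and the constant term otherwise; then `D_e = X_{bS(e)}`, and `X_U` is the coefficient
`D_f` of the restriction `f` of `e` to the blocks in `U`, with `bS(f) = U ∩ bS(e)`.

Build `T = bS(e)` by adding its blocks in increasing order. When `t` lies above every block of
`U`, we have `X_{U ∪ {t}} = X_U · r` for a matrix `r` depending only on `t`: both products share
the factors before `t`, and from `t` on `X_U` consists of invertible constant terms.
So a relation `X_U ∈ span {X_V : V ⊂ U}` propagates to `U ∪ {t}`. If no such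
relation ever arises, each new `X` escapes the span of the earlier ones, and the chain yields
`|T| + 1 = w² + 1` linearly independent `w × w` matrices, which is impossible.
-/

theorem Finset.insert_ssubset_insert {α : Type*} [DecidableEq α] {s t : Finset α} {x : α}
    (hx : x ∉ t) (h : s ⊂ t) : insert x s ⊂ insert x t := by
  refine Finset.ssubset_iff_subset_ne.2
    ⟨Finset.insert_subset_insert x h.subset, fun heq => h.ne ?_⟩
  have hxs : x ∉ s := fun hxs => hx (h.subset hxs)
  rw [← Finset.erase_insert hxs, heq, Finset.erase_insert hx]

section PiecewiseProd

variable {M : Type*} [Monoid M] {d : ℕ}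

theorem List.lt_of_mem_take_finRange {p : ℕ} {i : Fin d}
    (h : i ∈ (List.finRange d).take p) : (i : ℕ) < p := by
  obtain ⟨j, hj, rfl⟩ := List.mem_take_iff_getElem.1 h
  simp only [List.getElem_finRange, Fin.val_cast]
  omega

theorem List.le_of_mem_drop_finRange {p : ℕ} {i : Fin d}
    (h : i ∈ (List.finRange d).drop p) : p ≤ (i : ℕ) := by
  obtain ⟨j, hj, rfl⟩ := List.mem_drop_iff_getElem.1 h
  simp

theorem List.prod_map_finRange_eq_take_mul_drop {f g h : Fin d → M} (p : ℕ)
    (hg : ∀ i : Fin d, (i : ℕ) < p → f i = g i) (hh : ∀ i : Fin d, p ≤ (i : ℕ) → f i = h i) :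
    ((List.finRange d).map f).prod =
      (((List.finRange d).take p).map g).prod * (((List.finRange d).drop p).map h).prod := by
  conv_lhs => rw [← List.take_append_drop p (List.finRange d)]
  rw [List.map_append, List.prod_append,
    List.map_congr_left fun i hi => hg i (List.lt_of_mem_take_finRange hi),
    List.map_congr_left fun i hi => hh i (List.le_of_mem_drop_finRange hi)]

def piecewiseProd (a c : Fin d → M) (T : Finset (Fin d)) : M :=
  ((List.finRange d).map (T.piecewise a c)).prod

theorem exists_piecewiseProd_insert_eq_mul (a : Fin d → M) {c : Fin d → M}
    (hc : ∀ i, IsUnit (c i)) (t : Fin d) :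
    ∃ r : M, ∀ U : Finset (Fin d), (∀ i ∈ U, i < t) →
      piecewiseProd a c (insert t U) = piecewiseProd a c U * r := by
  set suf : Finset (Fin d) → M := fun T =>
    (((List.finRange d).drop t).map (T.piecewise a c)).prod
  have hsuf : IsUnit (suf ∅) :=
    List.prod_isUnit fun _ hx => by
      obtain ⟨i, -, rfl⟩ := List.mem_map.1 hx
      simpa using hc i
  refine ⟨↑hsuf.unit⁻¹ * suf {t}, fun U hU => ?_⟩
  set pre := (((List.finRange d).take t).map (U.piecewise a c)).prod
  have hU_eq : piecewiseProd a c U = pre * suf ∅ :=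
    List.prod_map_finRange_eq_take_mul_drop t (fun _ _ => rfl) fun i hi => by
      have : i ∉ U := fun h => (hU i h).not_ge hi
      simp [this]
  have hinsert_eq : piecewiseProd a c (insert t U) = pre * suf {t} :=
    List.prod_map_finRange_eq_take_mul_drop t
      (fun i hi => by simp [Finset.piecewise, Fin.ne_of_lt hi]) fun i hi => by
        have : i ∉ U := fun h => (hU i h).not_ge hi
        simp [Finset.piecewise, this]
  rw [hU_eq, hinsert_eq, mul_assoc, ← mul_assoc (suf ∅), hsuf.mul_val_inv, one_mul]

end PiecewiseProd

section Span

variable {F A : Type*} [Field F] [Ring A] [Algebra F A] {d : ℕ} {a c : Fin d → A}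

theorem piecewiseProd_mem_span_or_linearIndependent (hc : ∀ i, IsUnit (c i))
    (T : Finset (Fin d)) :
    piecewiseProd a c T ∈ Submodule.span F (piecewiseProd a c '' Set.Iio T) ∨
      ∃ (n : ℕ) (v : Fin n → A), T.card < n ∧ LinearIndependent F v ∧
        Set.range v ⊆ piecewiseProd a c '' Set.Iic T := by
  induction T using Finset.induction_on_max with
  | empty =>
    by_cases h0 : piecewiseProd a c ∅ = 0
    · left
      simp [h0]
    · right
      refine ⟨1, fun _ => piecewiseProd a c ∅, Nat.one_pos, linearIndependent_unique_iff.2 h0, ?_⟩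
      rintro _ ⟨_, rfl⟩
      exact ⟨∅, Set.mem_Iic.2 le_rfl, rfl⟩
  | insert t T hlt ih =>
    have htT : t ∉ T := fun h => lt_irrefl t (hlt t h)
    have hIic : Set.Iic T ⊆ Set.Iio (insert t T) := fun _ hU =>
      lt_of_le_of_lt hU (Finset.ssubset_insert htT)
    obtain ⟨r, hr⟩ := exists_piecewiseProd_insert_eq_mul a hc t
    rcases ih with hspan | ⟨n, v, hn, hv, hrange⟩
    · left
      have hmap := Submodule.mem_map_of_mem (f := LinearMap.mulRight F r) hspan
      rw [Submodule.map_span, ← Set.image_comp] at hmap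
      rw [hr T hlt]
      refine Submodule.span_mono ?_ hmap
      rintro _ ⟨U, hU, rfl⟩
      have hUT : U ⊂ T := hU
      exact ⟨insert t U, Finset.insert_ssubset_insert htT hUT,
        hr U fun i hi => hlt i (hUT.subset hi)⟩
    · by_cases hmem : piecewiseProd a c (insert t T) ∈ Submodule.span F (Set.range v)
      · left
        exact Submodule.span_mono (hrange.trans (Set.image_mono hIic)) hmem
      · right
        refine ⟨n + 1, Fin.snoc v _, by rw [Finset.card_insert_of_notMem htT]; omega,
          hv.finSnoc hmem, ?_⟩
        rw [Fin.range_snoc]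
        refine Set.insert_subset ⟨insert t T, Set.mem_Iic.2 le_rfl, rfl⟩ ?_
        exact hrange.trans (Set.image_mono fun _ hU => Set.mem_Iic.2 (le_of_lt (hIic hU)))

theorem piecewiseProd_mem_span_Iio [FiniteDimensional F A] (hc : ∀ i, IsUnit (c i))
    {T : Finset (Fin d)} (hT : Module.finrank F A ≤ T.card) :
    piecewiseProd a c T ∈ Submodule.span F (piecewiseProd a c '' Set.Iio T) := by
  refine (piecewiseProd_mem_span_or_linearIndependent hc T).resolve_right ?_
  rintro ⟨n, v, hn, hv, -⟩
  have := hv.fintype_card_le_finrank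
  rw [Fintype.card_fin] at this
  omega

end Span

section BlockRestrict

variable {n d : ℕ} (π : Fin n → Fin d)

def blockRestrict (U : Finset (Fin d)) (e : Fin n → ℕ) : Fin n → ℕ :=
  fun j => if π j ∈ U then e j else 0

theorem blockRestrict_blockSupport (e : Fin n → ℕ) :
    blockRestrict π (blockSupport π e) e = e := by
  funext j
  by_cases hj : e j = 0
  · simp [blockRestrict, hj]
  · have : π j ∈ blockSupport π e := by simpa [blockSupport] using ⟨j, rfl, hj⟩
    simp [blockRestrict, this]

theorem blockSupport_blockRestrict (U : Finset (Fin d)) (e : Fin n → ℕ) :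
    blockSupport π (blockRestrict π U e) = blockSupport π e ∩ U := by
  ext i
  simp only [blockSupport, blockRestrict, Finset.mem_filter, Finset.mem_univ, true_and,
    Finset.mem_inter]
  grind

theorem blockMonomial_blockRestrict (U : Finset (Fin d)) (i : Fin d) (e : Fin n → ℕ) :
    blockMonomial π i (blockRestrict π U e) = if i ∈ U then blockMonomial π i e else 0 := by
  ext j
  by_cases hi : i ∈ U <;> by_cases hj : π j = i <;> simp [blockMonomial, blockRestrict, hi, hj]

theorem blockCoeff_blockRestrict {F : Type*} [Field F] {w : ℕ}
    (D : Fin d → Matrix (Fin w) (Fin w) (MvPolynomial (Fin n) F)) (U : Finset (Fin d))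
    (e : Fin n → ℕ) :
    blockCoeff π D (blockRestrict π U e) =
      piecewiseProd (fun i => (D i).map (MvPolynomial.coeff (blockMonomial π i e)))
        (fun i => (D i).map (MvPolynomial.coeff 0)) U := by
  unfold blockCoeff piecewiseProd
  congr 2
  funext i
  by_cases hi : i ∈ U <;> simp [blockMonomial_blockRestrict, hi]

end BlockRestrict

theorem block_support_w_sq_dependent_general (F : Type*) [Field F] (w n d : ℕ)
    (π : Fin n → Fin d)
    (D : Fin d → Matrix (Fin w) (Fin w) (MvPolynomial (Fin n) F))
    (hinv : ∀ i, IsUnit ((D i).map (MvPolynomial.coeff (0 : Fin n →₀ ℕ))))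
    (e : Fin n → ℕ) (he : (blockSupport π e).card = w ^ 2) :
    blockCoeff π D e ∈ Submodule.span F
      {M | ∃ f, blockSupport π f ⊂ blockSupport π e ∧ M = blockCoeff π D f} := by
  have hrank : Module.finrank F (Matrix (Fin w) (Fin w) F) ≤ (blockSupport π e).card := by
    rw [Module.finrank_matrix, he]
    simp [sq]
  have hspan := piecewiseProd_mem_span_Iio
    (a := fun i => (D i).map (MvPolynomial.coeff (blockMonomial π i e))) hinv hrank
  rw [← blockCoeff_blockRestrict, blockRestrict_blockSupport] at hspan
  refine Submodule.span_mono ?_ hspan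
  rintro _ ⟨U, hU, rfl⟩
  have hUe : U ⊂ blockSupport π e := hU
  refine ⟨blockRestrict π U e, ?_, (blockCoeff_blockRestrict π D U e).symm⟩
  rwa [blockSupport_blockRestrict, Finset.inter_eq_right.2 hUe.subset]

/-- If all constant-term matrices `D_{i,0}` are invertible, then every coefficient `D_e`
with block-support size exactly `w²` lies in the span of the coefficients with strictly
smaller block-support. -/
theorem block_support_w_sq_dependent (F : Type*) [Field F] (w n d : ℕ)
    (hw : 1 ≤ w) (hd : 1 ≤ d) (π : Fin n → Fin d)
    (D : Fin d → Matrix (Fin w) (Fin w) (MvPolynomial (Fin n) F))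
    (hvars : ∀ i a b, ∀ j ∈ (D i a b).vars, π j = i)
    (hinv : ∀ i, IsUnit ((D i).map (MvPolynomial.coeff (0 : Fin n →₀ ℕ))))
    (e : Fin n → ℕ) (he : (blockSupport π e).card = w ^ 2) :
    blockCoeff π D e ∈ Submodule.span F
      {M | ∃ f, blockSupport π f ⊂ blockSupport π e ∧ M = blockCoeff π D f} :=
  block_support_w_sq_dependent_general F w n d π D hinv e he
end

section
/- Let F be an infinite field, 𝒞 a set of polynomials in F[x_1,...,x_n], and H ⊆ F^n a finite hitting set for 𝒞 with |H| = h. Let m, δ ≥ 1. Then there exists a finite set H' ⊆ F^n with |H'| ≤ m·δ·h + 1 such that every nonzero polynomial of the form C = C_1·C_2⋯C_m, where each C_i ∈ 𝒞 has total degree at most δ, satisfies C(h') ≠ 0 for some h' ∈ H'. -/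
/-- Lagrange interpolation: from a hitting set `H` of size `h` for a class `𝒞` one obtains
a hitting set of size at most `m·δ·h + 1` for products of `m` polynomials of `𝒞`, each of
total degree at most `δ`. -/
theorem product_hitting_set (F : Type*) [Field F] [Infinite F] (n m δ h : ℕ)
    (hm : 1 ≤ m) (hδ : 1 ≤ δ)
    (𝒞 : Set (MvPolynomial (Fin n) F)) (H : Finset (Fin n → F)) (hHcard : H.card = h)
    (hhit : ∀ p ∈ 𝒞, p ≠ 0 → ∃ x ∈ H, MvPolynomial.eval x p ≠ 0) :
    ∃ H' : Finset (Fin n → F), H'.card ≤ m * δ * h + 1 ∧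
      ∀ Cs : Fin m → MvPolynomial (Fin n) F,
        (∀ i, Cs i ∈ 𝒞) → (∀ i, (Cs i).totalDegree ≤ δ) →
        (∏ i, Cs i) ≠ 0 →
        ∃ x ∈ H', MvPolynomial.eval x (∏ i, Cs i) ≠ 0 := by
  classical
  rcases Nat.eq_zero_or_pos h with rfl | hh
  · -- H is empty, so every element of 𝒞 is zero and no nonzero product exists
    refine ⟨∅, by simp, fun Cs hmem _ hne => absurd ?_ hne⟩
    have : Cs ⟨0, hm⟩ = 0 := by
      by_contra h0
      obtain ⟨x, hx, -⟩ := hhit _ (hmem _) h0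
      simp [Finset.card_eq_zero.mp hHcard] at hx
    exact Finset.prod_eq_zero (Finset.mem_univ _) this
  -- enumerate H
  let a : Fin h → (Fin n → F) := fun j => (Finset.equivFinOfCardEq hHcard).symm j
  have ha_mem : ∀ j, a j ∈ H := fun j => ((Finset.equivFinOfCardEq hHcard).symm j).2
  have ha_surj : ∀ x ∈ H, ∃ j, a j = x := fun x hx =>
    ⟨Finset.equivFinOfCardEq hHcard ⟨x, hx⟩, by simp [a]⟩
  -- distinct parameter values
  obtain ⟨t⟩ : Nonempty (Fin h ↪ F) := ⟨(Fin.valEmbedding).trans (Infinite.natEmbedding F)⟩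
  -- Lagrange curve through the points of H
  let L : Fin n → Polynomial F := fun k =>
    Lagrange.interpolate Finset.univ t (fun j => a j k)
  have htinj : Set.InjOn t (Finset.univ : Finset (Fin h)) := t.injective.injOn
  have hLdeg : ∀ k, (L k).natDegree ≤ h - 1 := by
    intro k
    by_cases h0 : L k = 0
    · simp [h0]
    · have hd := Lagrange.degree_interpolate_lt (r := fun j => a j k) htinj
      simp only [Finset.card_univ, Fintype.card_fin] at hd
      have := (Polynomial.natDegree_lt_iff_degree_lt (n := h) h0).mpr (by exact_mod_cast hd)
      omega
  have hLeval : ∀ j k, Polynomial.eval (t j) (L k) = a j k := fun j k =>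
    Lagrange.eval_interpolate_at_node _ htinj (Finset.mem_univ j)
  -- the substitution homomorphism
  let φ : MvPolynomial (Fin n) F →ₐ[F] Polynomial F := MvPolynomial.aeval L
  have hφeval : ∀ (s : F) (p : MvPolynomial (Fin n) F),
      Polynomial.eval s (φ p) = MvPolynomial.eval (fun k => Polynomial.eval s (L k)) p := by
    intro s p
    have h1 := MvPolynomial.comp_aeval_apply (R := F) (Polynomial.aeval s) (p := p) (f := L)
    rw [show ((Polynomial.aeval s : Polynomial F →ₐ[F] F) : Polynomial F → F) = Polynomial.eval s
        from Polynomial.coe_aeval_eq_eval s] at h1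
    rw [h1, ← MvPolynomial.coe_aeval_eq_eval]; rfl
  -- parameter set
  obtain ⟨T, hT⟩ := Infinite.exists_subset_card_eq F (m * δ * (h - 1) + 1)
  refine ⟨T.image (fun s k => Polynomial.eval s (L k)), ?_, ?_⟩
  · calc (T.image _).card ≤ T.card := Finset.card_image_le
      _ = m * δ * (h - 1) + 1 := hT
      _ ≤ m * δ * h + 1 := by
          have : h - 1 ≤ h := Nat.sub_le _ _
          exact Nat.add_le_add_right (Nat.mul_le_mul_left _ this) 1
  · intro Cs hmem hdeg hne
    set C := ∏ i, Cs i with hC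
    -- φ C is nonzero
    have hφC : φ C ≠ 0 := by
      rw [hC, map_prod]
      refine Finset.prod_ne_zero_iff.mpr fun i _ => ?_
      have hCi : Cs i ≠ 0 := fun h0 => hne (Finset.prod_eq_zero (Finset.mem_univ i) h0)
      obtain ⟨x, hx, hxne⟩ := hhit _ (hmem i) hCi
      obtain ⟨j, rfl⟩ := ha_surj x hx
      intro h0
      apply hxne
      have := hφeval (t j) (Cs i)
      rw [h0] at this
      simp only [Polynomial.eval_zero] at this
      have heq : (fun k => Polynomial.eval (t j) (L k)) = a j := funext (hLeval j)
      rw [heq] at this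
      exact this.symm
    -- degree bound
    have hdegC : C.totalDegree ≤ m * δ := by
      calc C.totalDegree ≤ ∑ i, (Cs i).totalDegree := MvPolynomial.totalDegree_finset_prod _ _
        _ ≤ ∑ _i : Fin m, δ := Finset.sum_le_sum fun i _ => hdeg i
        _ = m * δ := by simp [mul_comm]
    have hφdeg : (φ C).natDegree ≤ m * δ * (h - 1) :=
      MvPolynomial.aeval_natDegree_le C hdegC L hLdeg
    -- find a good parameter value
    have : ∃ s ∈ T, Polynomial.eval s (φ C) ≠ 0 := by
      by_contra hall
      push_neg at hall
      apply hφC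
      refine Polynomial.eq_zero_of_natDegree_lt_card_of_eval_eq_zero' (φ C) T hall ?_
      rw [hT]; omega
    obtain ⟨s, hsT, hs⟩ := this
    refine ⟨fun k => Polynomial.eval s (L k), Finset.mem_image_of_mem _ hsT, ?_⟩
    rw [← hφeval]
    exact hs
end
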